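/- If a freely reduced word w (not containing a_i^{±1}) has positive conjugate reduced i-length |w|_i^cr > 0, then the Whitehead graph Γ_{a∖{a_i}}(w) has no cut vertex. -/

import Mathlib

namespace ESPaper

/-- A letter of the free group `F_n` over the standard basis: a generator index and a sign
    (`true` = the generator, `false` = its inverse). -/
abbrev Ltr (n : ℕ) := Fin n × Bool

/-- A word over the standard basis and its inverses. -/
abbrev Wrd (n : ℕ) := List (Ltr n)

/-- The inverse of a letter. -/
def linv {n : ℕ} (c : Ltr n) : Ltr n := (c.1, !c.2)

/-- The (formal) inverse of a word. -/
def winv {n : ℕ} (w : Wrd n) : Wrd n := w.reverse.map linv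

/-- `w` is freely reduced: no two consecutive letters are inverse to each other. -/
def Reduced {n : ℕ} (w : Wrd n) : Prop := List.Chain' (fun a b => b ≠ linv a) w

/-- `w` is cyclically reduced. -/
def CyclicallyReduced {n : ℕ} (w : Wrd n) : Prop := Reduced (w ++ w)

/-- `w` contains no occurrence of `a_i^{±1}`. -/
def Avoids {n : ℕ} (i : Fin n) (w : Wrd n) : Prop := ∀ c ∈ w, c.1 ≠ i

/-- `w` is a positive word (no inverse letters). -/
def Positive {n : ℕ} (w : Wrd n) : Prop := ∀ c ∈ w, c.2 = true

/-- Vertices of the Whitehead graph over `a ∖ {a_i}`: all letters whose index is not `i`. -/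
def WVert (n : ℕ) (i : Fin n) := {c : Ltr n // c.1 ≠ i}

/-- The Whitehead graph `Γ_{a∖{a_i}}(w)`: for each pair of consecutive letters `bc` of `w`,
    an edge from `b` to `c⁻¹`. -/
def WGraph {n : ℕ} (i : Fin n) (w : Wrd n) : SimpleGraph (WVert n i) where
  Adj x y := x ≠ y ∧ ∃ p ∈ w.zip w.tail,
    (x.1 = p.1 ∧ y.1 = linv p.2) ∨ (y.1 = p.1 ∧ x.1 = linv p.2)
  symm := ⟨by
    rintro x y ⟨hne, p, hp, h⟩
    exact ⟨hne.symm, p, hp, h.symm⟩⟩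
  loopless := ⟨fun x h => h.1 rfl⟩

/-- A graph has a cut vertex `v` if it is the union of two subgraphs, each with a vertex
    other than `v`, which intersect exactly in `v`.  (A disconnected graph on at least three
    vertices automatically has a cut vertex in this sense.) -/
def HasCutVertex {V : Type*} (G : SimpleGraph V) : Prop :=
  ∃ (v : V) (H₁ H₂ : G.Subgraph),
    H₁ ⊔ H₂ = ⊤ ∧ H₁.verts ∩ H₂.verts = {v} ∧ H₁.verts ≠ {v} ∧ H₂.verts ≠ {v}

/-- The simple `i`-length of a word `w` (containing no `a_i^{±1}`): the greatest `t` such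
    that `w = w_1 ⋯ w_t` where no Whitehead graph `Γ_{a∖{a_i}}(w_j)` has a cut vertex
    (`0` if there is no such decomposition, in particular if `Γ_{a∖{a_i}}(w)` has a cut
    vertex). -/
noncomputable def simpleLen {n : ℕ} (i : Fin n) (w : Wrd n) : ℕ :=
  sSup {t | ∃ ps : List (Wrd n), ps.length = t ∧ ps.flatten = w ∧
      ∀ p ∈ ps, p ≠ [] ∧ ¬ HasCutVertex (WGraph i p)}

/-- The conjugate reduced `i`-length of `w`: the minimum over all decompositions
    `w =_r v_1^{u_1} ⋯ v_l^{u_l}` (equality in the free group, `v^u = u⁻¹ v u`) of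
    `(l - 1) + Σ_j |v_j|_i^simple`. -/
noncomputable def crLen {n : ℕ} (i : Fin n) (w : Wrd n) : ℕ :=
  sInf {k | ∃ vs us : List (Wrd n), vs ≠ [] ∧ us.length = vs.length ∧
      (∀ v ∈ vs, Reduced v ∧ Avoids i v) ∧
      FreeGroup.mk w =
        ((vs.zip us).map fun p => (FreeGroup.mk p.2)⁻¹ * FreeGroup.mk p.1 * FreeGroup.mk p.2).prod ∧
      k = (vs.length - 1) + (vs.map (simpleLen i)).sum}

/-- One step of cyclic reduction: cancel the first against the last letter if possible. -/
def stripOnce {n : ℕ} : Wrd n → Wrd n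
  | [] => []
  | a :: rest => if rest.getLast? = some (linv a) then rest.dropLast else a :: rest

/-- Cyclic reduction of a (reduced) word. -/
def cyclicReduce {n : ℕ} (w : Wrd n) : Wrd n := stripOnce^[w.length] w

/-- `u` cyclically precedes position `p` in the cyclic word `v`. -/
def CycPrec {n : ℕ} (v : Wrd n) (p : ℕ) (u : Wrd n) : Prop :=
  u <:+ (v ++ v).take (v.length + p)

/-- `u` cyclically follows position `p` in the cyclic word `v`. -/
def CycFoll {n : ℕ} (v : Wrd n) (p : ℕ) (u : Wrd n) : Prop :=
  u <+: (v ++ v).drop (p + 1)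

/-- `u` cyclically precedes every occurrence of `a_i` (and `u⁻¹` cyclically follows every
    occurrence of `a_i⁻¹`) in the cyclic reductions of the words of `Y`. -/
def IsPrecWord {n : ℕ} (i : Fin n) (Y : List (Wrd n)) (u : Wrd n) : Prop :=
  Avoids i u ∧ ∀ y ∈ Y, ∀ p < (cyclicReduce y).length,
    ((cyclicReduce y)[p]? = some (i, true) → CycPrec (cyclicReduce y) p u) ∧
    ((cyclicReduce y)[p]? = some (i, false) → CycFoll (cyclicReduce y) p (winv u))

open scoped Classical in
/-- The word `w_L(Y)`: a longest word cyclically preceding every occurrence of `a_i`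
    in the cyclic reductions of the words of `Y` (trivial if there is no longest one). -/
noncomputable def wL {n : ℕ} (i : Fin n) (Y : List (Wrd n)) : Wrd n :=
  if h : ∃ u, IsPrecWord i Y u ∧ ∀ u', IsPrecWord i Y u' → u'.length ≤ u.length
  then h.choose else []

/-- The set of cyclic positions of `v` occupied by the occurrences of a preceding word of
    length `len` around the occurrences of `a_i^{±1}`. -/
def LOcc {n : ℕ} (i : Fin n) (len : ℕ) (v : Wrd n) : Set ℕ :=
  {t | ∃ p k, p < v.length ∧ k < len ∧
    ((v[p]? = some (i, true) ∧ t = (p + v.length - 1 - k) % v.length) ∨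
     (v[p]? = some (i, false) ∧ t = (p + 1 + k) % v.length))}

/-- The set of cyclic positions of `v` occupied by the occurrences of a following word of
    length `len` around the occurrences of `a_i^{±1}`. -/
def ROcc {n : ℕ} (i : Fin n) (len : ℕ) (v : Wrd n) : Set ℕ :=
  {t | ∃ p k, p < v.length ∧ k < len ∧
    ((v[p]? = some (i, true) ∧ t = (p + 1 + k) % v.length) ∨
     (v[p]? = some (i, false) ∧ t = (p + v.length - 1 - k) % v.length))}

/-- `u` cyclically follows every occurrence of `a_i` (and `u⁻¹` precedes every `a_i⁻¹`)
    in the cyclic reductions of the words of `Y`, with no occurrence of `u` intersecting an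
    occurrence of `w_L(Y)`. -/
def IsFolWord {n : ℕ} (i : Fin n) (Y : List (Wrd n)) (u : Wrd n) : Prop :=
  Avoids i u ∧ (∀ y ∈ Y, ∀ p < (cyclicReduce y).length,
    ((cyclicReduce y)[p]? = some (i, true) → CycFoll (cyclicReduce y) p u) ∧
    ((cyclicReduce y)[p]? = some (i, false) → CycPrec (cyclicReduce y) p (winv u))) ∧
  ∀ y ∈ Y, Disjoint (LOcc i (wL i Y).length (cyclicReduce y)) (ROcc i u.length (cyclicReduce y))

open scoped Classical in
/-- The word `w_R(Y)`. -/
noncomputable def wR {n : ℕ} (i : Fin n) (Y : List (Wrd n)) : Wrd n :=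
  if h : ∃ u, IsFolWord i Y u ∧ ∀ u', IsFolWord i Y u' → u'.length ≤ u.length
  then h.choose else []

/-- The auxiliary automorphism `α'` sending `a_i` to `w_L⁻¹ a_i w_R⁻¹`. -/
noncomputable def alphaP {n : ℕ} (i : Fin n) (Y : List (Wrd n)) :
    FreeGroup (Fin n) →* FreeGroup (Fin n) :=
  FreeGroup.lift fun j => if j = i then
    (FreeGroup.mk (wL i Y))⁻¹ * FreeGroup.of i * (FreeGroup.mk (wR i Y))⁻¹
  else FreeGroup.of j

/-- The cyclic reduction of `α'(y)` written as a reduced word. -/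
noncomputable def apWord {n : ℕ} (i : Fin n) (Y : List (Wrd n)) (y : Wrd n) : Wrd n :=
  cyclicReduce (FreeGroup.toWord (alphaP i Y (FreeGroup.mk y)))

/-- In `α' Y`, every maximal power of `a_i` either occurs by itself as an element, or is
    cyclically conjugated by `u`. -/
def IsConjWord {n : ℕ} (i : Fin n) (Y : List (Wrd n)) (u : Wrd n) : Prop :=
  Avoids i u ∧ ∀ y ∈ Y,
    (∀ c ∈ apWord i Y y, c.1 = i) ∨
    ∀ p < (apWord i Y y).length,
      (apWord i Y y)[p]?.map Prod.fst = some i →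
        (((apWord i Y y)[(p + (apWord i Y y).length - 1) % (apWord i Y y).length]?.map
            Prod.fst ≠ some i → CycPrec (apWord i Y y) p (winv u)) ∧
         ((apWord i Y y)[(p + 1) % (apWord i Y y).length]?.map Prod.fst ≠ some i →
            CycFoll (apWord i Y y) p u))

open scoped Classical in
/-- The word `w_C(Y)` (trivial when every maximal power of `a_i` occurs by itself,
    since then there is no longest conjugating word). -/
noncomputable def wC {n : ℕ} (i : Fin n) (Y : List (Wrd n)) : Wrd n :=
  if h : ∃ u, IsConjWord i Y u ∧ ∀ u', IsConjWord i Y u' → u'.length ≤ u.length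
  then h.choose else []

/-- The automorphism `α_Y` sending `a_i` to `w_L⁻¹ w_C a_i w_C⁻¹ w_R⁻¹`. -/
noncomputable def alphaFG {n : ℕ} (i : Fin n) (Y : List (Wrd n)) :
    FreeGroup (Fin n) →* FreeGroup (Fin n) :=
  FreeGroup.lift fun j => if j = i then
    (FreeGroup.mk (wL i Y))⁻¹ * FreeGroup.mk (wC i Y) * FreeGroup.of i *
      (FreeGroup.mk (wC i Y))⁻¹ * (FreeGroup.mk (wR i Y))⁻¹
  else FreeGroup.of j

/-- `u` is an `i`-chunk of `g`: a maximal cyclic subword of the cyclic reduction of `g`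
    containing no `a_i^{±1}`. -/
def IsIChunk {n : ℕ} (i : Fin n) (g : FreeGroup (Fin n)) (u : Wrd n) : Prop :=
  Avoids i u ∧
    ((∃ p < (cyclicReduce g.toWord).length,
        (cyclicReduce g.toWord)[p]?.map Prod.fst = some i ∧
        u <+: (cyclicReduce g.toWord ++ cyclicReduce g.toWord).drop (p + 1) ∧
        ((cyclicReduce g.toWord ++ cyclicReduce g.toWord).drop (p + 1 + u.length)).head?.map
          Prod.fst = some i) ∨
     (Avoids i (cyclicReduce g.toWord) ∧ ∃ p ≤ (cyclicReduce g.toWord).length,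
        u = (cyclicReduce g.toWord).drop p ++ (cyclicReduce g.toWord).take p))

/-- `k(Y)`: the maximal conjugate reduced `i`-length of an `i`-chunk of `α_Y y`, `y ∈ Y`. -/
noncomputable def kLen {n : ℕ} (i : Fin n) (Y : List (Wrd n)) : ℕ :=
  sSup {c | ∃ y ∈ Y, ∃ u, IsIChunk i (alphaFG i Y (FreeGroup.mk y)) u ∧ c = crLen i u}

/-- The full `i`-length `|Y|_i = k(Y) + |w_R(Y) w_L(Y)|_i^cr` of a set of reduced words. -/
noncomputable def fullLen {n : ℕ} (i : Fin n) (Y : List (Wrd n)) : ℕ :=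
  kLen i Y + crLen i (wR i Y ++ wL i Y)

/-- `x` is an (ordered) basis of the free group: it freely generates, i.e. the induced
    endomorphism of the free group is bijective. -/
def IsBasis {n : ℕ} (x : Fin n → FreeGroup (Fin n)) : Prop :=
  Function.Bijective (FreeGroup.lift x)

/-- A basis of `F_n` given by reduced words over the standard basis. -/
def IsWordBasis {n : ℕ} (x : Fin n → Wrd n) : Prop :=
  (∀ j, Reduced (x j)) ∧ IsBasis fun j => FreeGroup.mk (x j)

/-- `(A, B)` is a free factorization of `G` into two nontrivial free factors. -/
def IsFacPair {G : Type*} [Group G] (A B : Subgroup G) : Prop :=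
  A ≠ ⊥ ∧ B ≠ ⊥ ∧ Function.Bijective (Monoid.Coprod.lift A.subtype B.subtype)

/-- `(P, Q, R)` is a free factorization of `G` into three nontrivial free factors. -/
def IsFac3 {G : Type*} [Group G] (P Q R : Subgroup G) : Prop :=
  P ≠ ⊥ ∧ Q ≠ ⊥ ∧ R ≠ ⊥ ∧
    Function.Bijective (Monoid.CoprodI.lift fun j : Fin 3 => (![P, Q, R] j).subtype)

/-- The conjugate of a subgroup. -/
def conjSub {G : Type*} [Group G] (g : G) (H : Subgroup G) : Subgroup G :=
  H.map (MulAut.conj g).toMonoidHom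

/-- Two (ordered) pairs of subgroups determine the same vertex: they agree up to
    conjugation and swapping the factors. -/
def FacRel {G : Type*} [Group G] (p q : Subgroup G × Subgroup G) : Prop :=
  ∃ g : G, (q.1 = conjSub g p.1 ∧ q.2 = conjSub g p.2) ∨
           (q.1 = conjSub g p.2 ∧ q.2 = conjSub g p.1)

/-- Vertices of the edge splitting graph: pairs of subgroups up to conjugation and swap. -/
abbrev ESV (n : ℕ) := Quot (@FacRel (FreeGroup (Fin n)) _)

/-- The vertex of the edge splitting graph represented by the pair `(A, B)`. -/
def esv {n : ℕ} (A B : Subgroup (FreeGroup (Fin n))) : ESV n := Quot.mk _ (A, B)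

/-- The factorization `p` is refined by the factorization `q` via a common refinement
    `P * Q * R` into three nontrivial free factors: `p = (P*Q, R)` and `q = (P, Q*R)`. -/
def Refines {G : Type*} [Group G] (p q : Subgroup G × Subgroup G) : Prop :=
  ∃ P Q R : Subgroup G, IsFac3 P Q R ∧ p.1 = P ⊔ Q ∧ p.2 = R ∧ q.1 = P ∧ q.2 = Q ⊔ R

/-- The edge splitting graph `ES(n)`: two distinct vertices are adjacent if they admit
    representatives with a common refinement into three nontrivial free factors. -/
def ESGraph (n : ℕ) : SimpleGraph (ESV n) where
  Adj X Y := X ≠ Y ∧ ∃ p q, Quot.mk _ p = X ∧ Quot.mk _ q = Y ∧ (Refines p q ∨ Refines q p)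
  symm := ⟨by
    rintro X Y ⟨hne, p, q, hp, hq, h⟩
    exact ⟨hne.symm, q, p, hq, hp, h.symm⟩⟩
  loopless := ⟨fun X h => h.1 rfl⟩

/-- Nested families of canceling pairs:  `Fam w gs f` holds iff `w` carries a nested family
    `F` of `f` canceling pairs whose family of (possibly empty) maximal subwords disjoint
    from the pairs is `gs`. -/
inductive Fam {n : ℕ} : Wrd n → List (Wrd n) → ℕ → Prop
  | gap (g : Wrd n) : Fam g [g] 0
  | cons (g u w rest : Wrd n) (gs₁ gs₂ : List (Wrd n)) (f₁ f₂ : ℕ) :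
      u ≠ [] → Fam w gs₁ f₁ → Fam rest gs₂ f₂ →
      Fam (g ++ u ++ w ++ winv u ++ rest) (g :: (gs₁ ++ gs₂)) (f₁ + f₂ + 1)

/-!
A cut vertex of `Γ(w)` is inherited by `Γ(p)` for every subword `p` of `w`, since the
Whitehead graph of `p` is a spanning subgraph of that of `w`. Hence no decomposition of `w`
into pieces without cut vertex exists, `|w|_i^simple = 0`, and the trivial decomposition
`w = w^1` gives `|w|_i^cr ≤ |w|_i^simple = 0`.
-/

theorem _root_.List.mem_zip_tail_iff_infix {α : Type*} {l : List α} {a b : α} :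
    (a, b) ∈ l.zip l.tail ↔ [a, b] <:+: l := by
  match l with
  | [] => simp
  | [_] => simpa using fun h => by simpa using h.length_le
  | x :: y :: m =>
    have ih := List.mem_zip_tail_iff_infix (l := y :: m) (a := a) (b := b)
    simp only [List.tail_cons, List.zip_cons_cons, List.mem_cons, Prod.mk.injEq] at ih ⊢
    rw [List.infix_cons_iff, ih]
    simp [List.cons_prefix_cons]

theorem _root_.List.IsInfix.mem_zip_tail {α : Type*} {p l : List α} (h : p <:+: l) {q : α × α}
    (hq : q ∈ p.zip p.tail) : q ∈ l.zip l.tail :=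
  List.mem_zip_tail_iff_infix.2 ((List.mem_zip_tail_iff_infix.1 hq).trans h)

theorem HasCutVertex.of_le {V : Type*} {G G' : SimpleGraph V} (hle : G ≤ G')
    (h : HasCutVertex G') : HasCutVertex G := by
  obtain ⟨v, H₁, H₂, hsup, hverts, h₁, h₂⟩ := h
  let f := SimpleGraph.Hom.ofLE hle
  refine ⟨v, H₁.comap f, H₂.comap f, ?_, hverts, h₁, h₂⟩
  rw [← SimpleGraph.Subgraph.comap_equiv_top f, ← hsup]
  ext <;> simp [and_or_left]

theorem wGraph_le_of_infix {n : ℕ} (i : Fin n) {p w : Wrd n} (h : p <:+: w) :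
    WGraph i p ≤ WGraph i w :=
  fun _ _ ⟨hne, q, hq, hxy⟩ => ⟨hne, q, h.mem_zip_tail hq, hxy⟩

theorem simpleLen_eq_zero_of_hasCutVertex {n : ℕ} {i : Fin n} {w : Wrd n}
    (hcut : HasCutVertex (WGraph i w)) : simpleLen i w = 0 := by
  refine Nat.le_zero.mp (csSup_le' ?_)
  rintro t ⟨ps, rfl, rfl, hps⟩
  cases ps with
  | nil => exact le_rfl
  | cons p ps =>
    have hp : p <:+: (p :: ps).flatten := List.infix_of_mem_flatten List.mem_cons_self
    exact absurd (hcut.of_le (wGraph_le_of_infix i hp)) (hps p List.mem_cons_self).2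

theorem crLen_le_simpleLen {n : ℕ} {i : Fin n} {w : Wrd n} (hred : Reduced w)
    (hav : Avoids i w) : crLen i w ≤ simpleLen i w := by
  refine Nat.sInf_le ⟨[w], [[]], List.cons_ne_nil _ _, rfl, ?_, ?_, by simp⟩
  · simpa using ⟨hred, hav⟩
  · simp

theorem statement5_general (n : ℕ) (i : Fin n) (w : Wrd n)
    (hred : Reduced w) (hav : Avoids i w) (hpos : 0 < crLen i w) :
    ¬ HasCutVertex (WGraph i w) := fun hcut =>
  hpos.not_ge <| (crLen_le_simpleLen hred hav).trans (simpleLen_eq_zero_of_hasCutVertex hcut).le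

/-- positive conjugate reduced `i`-length implies no cut vertex in the
Whitehead graph. -/
theorem statement5 (n : ℕ) (hn : 2 < n) (i : Fin n) (w : Wrd n)
    (hred : Reduced w) (hav : Avoids i w) (hpos : 0 < crLen i w) :
    ¬ HasCutVertex (WGraph i w) :=
  statement5_general n i w hred hav hpos

end ESPaper
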